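/- arXiv:2110.01453 — 3 statements merged into one kernel-verified Lean document; each statement's English description precedes it below -/
import Mathlib

section
/- Let R, σ², q, T > 0 and suppose (2^R - 1)·σ² < q/T. Then the function f(τ) = ((1-τ)/τ)·(2^{R/(1-τ)} - 1)·σ² - q/(T·τ) is strictly monotonically increasing on (0,1). -/
/-!
Substituting `y = τ / (1 - τ)`, which maps `(0, 1)` increasingly onto `(0, ∞)`, turns the function
into `σ 2^R (b^y - 1) / y + (σ 2^R - σ - q/T) / y - q/T` with `b = 2^R`. The first summand is
monotone because the secant slopes of the convex function `b^y` through `0` increase; the second is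
strictly increasing because its numerator is negative, which is exactly `(2^R - 1) σ < q/T`.
-/

open Set Real

section OrderedField

variable {𝕜 : Type*} [Field 𝕜] [LinearOrder 𝕜] [IsStrictOrderedRing 𝕜]

lemma strictMonoOn_const_div_of_neg {d : 𝕜} (hd : d < 0) :
    StrictMonoOn (fun y => d / y) (Ioi 0) := fun x hx y hy hxy => by
  simpa only [div_eq_mul_inv] using mul_lt_mul_of_neg_left (strictAntiOn_inv_pos hx hy hxy) hd

lemma strictMonoOn_div_one_sub : StrictMonoOn (fun τ : 𝕜 => τ / (1 - τ)) (Ioo 0 1) :=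
  fun x hx y hy hxy => by
    rw [div_lt_div_iff₀ (sub_pos.2 hx.2) (sub_pos.2 hy.2)]
    nlinarith

lemma mapsTo_div_one_sub : MapsTo (fun τ : 𝕜 => τ / (1 - τ)) (Ioo 0 1) (Ioi 0) :=
  fun _ hτ => div_pos hτ.1 (sub_pos.2 hτ.2)

end OrderedField

lemma strictMonoOn_mul_slope_rpow_add_div {a b d : ℝ} (hb : 0 < b) (ha : 0 ≤ a) (hd : d < 0) :
    StrictMonoOn (fun y => a * slope (fun x : ℝ => b ^ x) 0 y + d / y) (Ioi 0) := by
  have hslope : MonotoneOn (slope (fun x : ℝ => b ^ x) 0) (Ioi 0) :=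
    ((convexOn_rpow_left hb).monotoneOn_slope_gt (mem_univ 0)).mono fun y hy => ⟨mem_univ y, hy⟩
  exact MonotoneOn.add_strictMono
    (fun x hx y hy hxy => mul_le_mul_of_nonneg_left (hslope hx hy hxy) ha)
    (strictMonoOn_const_div_of_neg hd)

lemma eq_mul_slope_rpow_add_div (R σ c τ : ℝ) (hτ : τ ∈ Ioo 0 1) :
    ((1 - τ) / τ) * ((2:ℝ) ^ (R / (1 - τ)) - 1) * σ - c / τ =
      σ * 2 ^ R * slope (fun x => ((2:ℝ) ^ R) ^ x) 0 (τ / (1 - τ))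
        + (σ * 2 ^ R - σ - c) / (τ / (1 - τ)) - c := by
  have hτ0 : τ ≠ 0 := hτ.1.ne'
  have hτ1 : 1 - τ ≠ 0 := (sub_pos.2 hτ.2).ne'
  have hexp : (2:ℝ) ^ (R / (1 - τ)) = 2 ^ R * ((2:ℝ) ^ R) ^ (τ / (1 - τ)) := by
    rw [← rpow_mul zero_le_two, ← rpow_add zero_lt_two]
    congr 1
    field_simp
    ring
  rw [hexp, slope_def_field, rpow_zero, sub_zero]
  field_simp
  ring

theorem stmt_2_general (R σ q T : ℝ) (hσ : 0 < σ)
    (hcond : ((2:ℝ) ^ R - 1) * σ < q / T) :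
    StrictMonoOn
      (fun τ : ℝ => ((1 - τ) / τ) * ((2:ℝ) ^ (R / (1 - τ)) - 1) * σ - q / (T * τ))
      (Set.Ioo 0 1) := by
  have hcoeff : σ * 2 ^ R - σ - q / T < 0 := by linarith
  have hmono := ((strictMonoOn_mul_slope_rpow_add_div (rpow_pos_of_pos zero_lt_two R)
    (by positivity : 0 ≤ σ * 2 ^ R) hcoeff).add_const (-(q / T))).comp strictMonoOn_div_one_sub
    mapsTo_div_one_sub
  refine hmono.congr fun τ hτ => ?_
  rw [Function.comp_apply, ← div_div, eq_mul_slope_rpow_add_div R σ (q / T) τ hτ]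
  exact (sub_eq_add_neg _ _).symm

theorem stmt_2 (R σ q T : ℝ) (hR : 0 < R) (hσ : 0 < σ) (hq : 0 < q) (hT : 0 < T)
    (hcond : ((2:ℝ) ^ R - 1) * σ < q / T) :
    StrictMonoOn
      (fun τ : ℝ => ((1 - τ) / τ) * ((2:ℝ) ^ (R / (1 - τ)) - 1) * σ - q / (T * τ))
      (Set.Ioo 0 1) :=
  stmt_2_general R σ q T hσ hcond
end

section
/- Let R, σ², q, T > 0 with (2^R - 1)·σ² > q/T. Define f(τ) = ((1-τ)/τ)·(2^{R/(1-τ)} - 1)·σ² - q/(T·τ) on (0,1). Then f is convex on (0,1), i.e., its second derivative is positive on (0,1). -/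
open Set Real

/-!
Write `2 ^ (R / (1 - τ)) = exp (c / (1 - τ))` with `c = R log 2` and `κ = q / T`. With
`E = exp (c / (1 - τ))` and `x = c τ / (1 - τ)`, a direct computation gives
`τ³ f''(τ) = 2σ(E - 1) - 2κ + σE(x² / (1 - τ) - 2x)`.
Since `c / (1 - τ) - x = c`, we have `exp c = E e⁻ˣ`, so the hypothesis `κ < σ(exp c - 1)`
reduces positivity to the Taylor bound `e⁻ˣ ≤ 1 - x + x² / 2` for `x ≥ 0`
(and `x² ≤ x² / (1 - τ)`).
-/

noncomputable section

theorem iteratedDeriv_two_eq_of_hasDerivAt {𝕜 F : Type*} [NontriviallyNormedField 𝕜]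
    [NormedAddCommGroup F] [NormedSpace 𝕜 F] {f f' : 𝕜 → F} {f'' : F} {s : Set 𝕜} {x : 𝕜}
    (hs : IsOpen s) (hf : ∀ y ∈ s, HasDerivAt f (f' y) y) (hx : x ∈ s)
    (hf' : HasDerivAt f' f'' x) : iteratedDeriv 2 f x = f'' := by
  have hderiv : deriv f =ᶠ[nhds x] f' :=
    Filter.eventually_of_mem (hs.mem_nhds hx) fun y hy => (hf y hy).deriv
  rw [iteratedDeriv_succ, iteratedDeriv_one, hderiv.deriv_eq, hf'.deriv]

theorem exp_neg_le_one_sub_add_sq_div_two {x : ℝ} (hx : 0 ≤ x) :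
    exp (-x) ≤ 1 - x + x ^ 2 / 2 := by
  have hquad := quadratic_le_exp_of_nonneg hx
  have hprod : exp (-x) * exp x = 1 := by rw [← exp_add, neg_add_cancel, exp_zero]
  nlinarith [exp_pos (-x), exp_pos x, sq_nonneg (x ^ 2)]

theorem hasDerivAt_exp_div_one_sub (c : ℝ) {τ : ℝ} (hτ : 1 - τ ≠ 0) :
    HasDerivAt (fun t => exp (c / (1 - t))) (c * exp (c / (1 - τ)) / (1 - τ) ^ 2) τ := by
  have hquot := (hasDerivAt_const τ c).fun_div ((hasDerivAt_id' τ).const_sub 1) hτ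
  convert hquot.exp using 1
  field_simp
  ring

def harvestedPower (c σ κ τ : ℝ) : ℝ :=
  (1 - τ) / τ * (exp (c / (1 - τ)) - 1) * σ - κ / τ

def harvestedPowerDeriv (c σ κ τ : ℝ) : ℝ :=
  σ * (c * exp (c / (1 - τ)) / (τ * (1 - τ)) - (exp (c / (1 - τ)) - 1) / τ ^ 2) + κ / τ ^ 2

def harvestedPowerDeriv2 (c σ κ τ : ℝ) : ℝ :=
  (2 * σ * (exp (c / (1 - τ)) - 1) - 2 * κ
    + σ * exp (c / (1 - τ)) * (c ^ 2 * τ ^ 2 / (1 - τ) ^ 3 - 2 * c * τ / (1 - τ))) / τ ^ 3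

section Derivatives

variable (c σ κ : ℝ) {τ : ℝ}

theorem hasDerivAt_harvestedPower (h₀ : τ ≠ 0) (h₁ : 1 - τ ≠ 0) :
    HasDerivAt (harvestedPower c σ κ) (harvestedPowerDeriv c σ κ τ) τ := by
  have hratio := ((hasDerivAt_id' τ).const_sub 1).fun_div (hasDerivAt_id' τ) h₀
  have hexp := (hasDerivAt_exp_div_one_sub c h₁).sub_const 1
  have hinv := (hasDerivAt_const τ κ).fun_div (hasDerivAt_id' τ) h₀
  refine (((hratio.fun_mul hexp).mul_const σ).fun_sub hinv).congr_deriv ?_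
  unfold harvestedPowerDeriv
  field_simp
  ring

theorem hasDerivAt_harvestedPowerDeriv (h₀ : τ ≠ 0) (h₁ : 1 - τ ≠ 0) :
    HasDerivAt (harvestedPowerDeriv c σ κ) (harvestedPowerDeriv2 c σ κ τ) τ := by
  have hexp := hasDerivAt_exp_div_one_sub c h₁
  have hsq : HasDerivAt (fun t : ℝ => t ^ 2) (2 * τ) τ := by simpa using hasDerivAt_pow 2 τ
  have hden := (hasDerivAt_id' τ).fun_mul ((hasDerivAt_id' τ).const_sub 1)
  have hfirst := (hexp.const_mul c).fun_div hden (mul_ne_zero h₀ h₁)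
  have hsecond := (hexp.sub_const 1).fun_div hsq (pow_ne_zero 2 h₀)
  have hthird := (hasDerivAt_const τ κ).fun_div hsq (pow_ne_zero 2 h₀)
  refine (((hfirst.fun_sub hsecond).const_mul σ).fun_add hthird).congr_deriv ?_
  unfold harvestedPowerDeriv2
  field_simp
  ring

end Derivatives

theorem harvestedPowerDeriv2_pos {c σ κ τ : ℝ} (hσ : 0 ≤ σ) (hc : 0 ≤ c)
    (hκ : κ < σ * (exp c - 1)) (hτ : τ ∈ Ioo 0 1) : 0 < harvestedPowerDeriv2 c σ κ τ := by
  obtain ⟨h₀, h₁⟩ := hτ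
  have hu : 0 < 1 - τ := sub_pos.2 h₁
  set E := exp (c / (1 - τ))
  set x := c * τ / (1 - τ) with hx_def
  have hx : 0 ≤ x := by positivity
  have hexp_c : exp c = E * exp (-x) := by
    rw [← exp_add]
    congr 1
    rw [hx_def]
    field_simp
    ring
  have htaylor : exp c ≤ E * (1 - x + x ^ 2 / 2) :=
    hexp_c ▸ mul_le_mul_of_nonneg_left (exp_neg_le_one_sub_add_sq_div_two hx) (exp_pos _).le
  have hsq_le : x ^ 2 ≤ c ^ 2 * τ ^ 2 / (1 - τ) ^ 3 := by
    rw [show c ^ 2 * τ ^ 2 / (1 - τ) ^ 3 = x ^ 2 / (1 - τ) by rw [hx_def]; field_simp]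
    exact le_div_self (sq_nonneg x) hu (by linarith)
  have hnum : 0 < 2 * σ * (E - 1) - 2 * κ + σ * E * (c ^ 2 * τ ^ 2 / (1 - τ) ^ 3 - 2 * x) := by
    nlinarith [mul_le_mul_of_nonneg_left htaylor hσ,
      mul_le_mul_of_nonneg_left hsq_le (mul_nonneg hσ (exp_pos (c / (1 - τ))).le)]
  unfold harvestedPowerDeriv2
  rw [show 2 * c * τ / (1 - τ) = 2 * x by ring]
  positivity

section Convexity

variable {c σ κ : ℝ}

theorem hasDerivAt_harvestedPower_of_mem_Ioo {τ : ℝ} (hτ : τ ∈ Ioo 0 1) :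
    HasDerivAt (harvestedPower c σ κ) (harvestedPowerDeriv c σ κ τ) τ :=
  hasDerivAt_harvestedPower c σ κ hτ.1.ne' (sub_pos.2 hτ.2).ne'

theorem hasDerivAt_harvestedPowerDeriv_of_mem_Ioo {τ : ℝ} (hτ : τ ∈ Ioo 0 1) :
    HasDerivAt (harvestedPowerDeriv c σ κ) (harvestedPowerDeriv2 c σ κ τ) τ :=
  hasDerivAt_harvestedPowerDeriv c σ κ hτ.1.ne' (sub_pos.2 hτ.2).ne'

theorem iteratedDeriv_two_harvestedPower {τ : ℝ} (hτ : τ ∈ Ioo 0 1) :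
    iteratedDeriv 2 (harvestedPower c σ κ) τ = harvestedPowerDeriv2 c σ κ τ :=
  iteratedDeriv_two_eq_of_hasDerivAt isOpen_Ioo (fun _ => hasDerivAt_harvestedPower_of_mem_Ioo)
    hτ (hasDerivAt_harvestedPowerDeriv_of_mem_Ioo hτ)

theorem convexOn_harvestedPower (hσ : 0 ≤ σ) (hc : 0 ≤ c) (hκ : κ < σ * (exp c - 1)) :
    ConvexOn ℝ (Ioo 0 1) (harvestedPower c σ κ) := by
  refine convexOn_of_hasDerivWithinAt2_nonneg (f' := harvestedPowerDeriv c σ κ)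
    (f'' := harvestedPowerDeriv2 c σ κ) (convex_Ioo 0 1)
    (fun τ hτ => (hasDerivAt_harvestedPower_of_mem_Ioo hτ).continuousAt.continuousWithinAt)
    ?_ ?_ ?_ <;> rw [interior_Ioo]
  · exact fun τ hτ => (hasDerivAt_harvestedPower_of_mem_Ioo hτ).hasDerivWithinAt
  · exact fun τ hτ => (hasDerivAt_harvestedPowerDeriv_of_mem_Ioo hτ).hasDerivWithinAt
  · exact fun τ hτ => (harvestedPowerDeriv2_pos hσ hc hκ hτ).le

end Convexity

end

theorem stmt_4_general (R σ q T : ℝ) (hR : 0 < R) (hσ : 0 < σ)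
    (hcond : q / T < ((2:ℝ) ^ R - 1) * σ)
    (f : ℝ → ℝ)
    (hf : ∀ τ ∈ Set.Ioo (0:ℝ) 1,
      f τ = ((1 - τ) / τ) * ((2:ℝ) ^ (R / (1 - τ)) - 1) * σ - q / (T * τ)) :
    ConvexOn ℝ (Set.Ioo 0 1) f ∧ ∀ τ ∈ Set.Ioo (0:ℝ) 1, 0 < iteratedDeriv 2 f τ := by
  set c := log 2 * R
  have hc : 0 ≤ c := (mul_pos (log_pos one_lt_two) hR).le
  have hκ : q / T < σ * (exp c - 1) := by
    rw [rpow_def_of_pos two_pos] at hcond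
    linarith
  have hfg : EqOn (harvestedPower c σ (q / T)) f (Ioo 0 1) := fun τ hτ => by
    rw [hf τ hτ, rpow_def_of_pos two_pos, ← mul_div_assoc, harvestedPower, div_div]
  refine ⟨(convexOn_harvestedPower hσ.le hc hκ).congr hfg, fun τ hτ => ?_⟩
  rw [← (hfg.eventuallyEq_of_mem (isOpen_Ioo.mem_nhds hτ)).iteratedDeriv_eq,
    iteratedDeriv_two_harvestedPower hτ]
  exact harvestedPowerDeriv2_pos hσ.le hc hκ hτ

theorem stmt_4 (R σ q T : ℝ) (hR : 0 < R) (hσ : 0 < σ) (hq : 0 < q) (hT : 0 < T)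
    (hcond : q / T < ((2:ℝ) ^ R - 1) * σ)
    (f : ℝ → ℝ)
    (hf : ∀ τ ∈ Set.Ioo (0:ℝ) 1,
      f τ = ((1 - τ) / τ) * ((2:ℝ) ^ (R / (1 - τ)) - 1) * σ - q / (T * τ)) :
    ConvexOn ℝ (Set.Ioo 0 1) f ∧ ∀ τ ∈ Set.Ioo (0:ℝ) 1, 0 < iteratedDeriv 2 f τ :=
  stmt_4_general R σ q T hR hσ hcond f hf
end

section
/- Let R, σ², q, T > 0 with (2^R - 1)·σ² > q/T, and let f(τ) = ((1-τ)/τ)·(2^{R/(1-τ)} - 1)·σ² - q/(T·τ) on (0,1). Then f(τ) → +∞ as τ → 0⁺ and as τ → 1⁻, and f attains a positive minimum at some interior point τ* ∈ (0,1). -/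
/-!
With `u = 1 - τ` the uplink fraction, `f τ = g u / τ` where `g u = u (2^(R/u) - 1) σ - q/T` is the
energy shortfall per unit frame time. Convexity of `x ↦ 2^x` gives `u (2^(R/u) - 1) ≥ 2^R - 1` for
`u ∈ (0, 1]`, so the hypothesis makes `g` positive on `(0, 1]`, hence `f > 0`. As `τ → 0⁺`,
`g (1 - τ) → g 1 > 0` while `1/τ → ∞`; as `τ → 1⁻`, `u 2^(R/u) → ∞` because the exponential beats
`1/u`. A continuous function on an open interval that blows up at both ends attains its minimum.
-/

open Filter Set Real Topology

theorem ContinuousOn.exists_isMinOn_Ioo_of_tendsto_atTop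
    {α β : Type*} [ConditionallyCompleteLinearOrder α] [TopologicalSpace α] [OrderTopology α]
    [DenselyOrdered α] [LinearOrder β] [TopologicalSpace β] [ClosedIicTopology β]
    {f : α → β} {a b : α} (hab : a < b) (hf : ContinuousOn f (Ioo a b))
    (ha : Tendsto f (𝓝[>] a) atTop) (hb : Tendsto f (𝓝[<] b) atTop) :
    ∃ c ∈ Ioo a b, IsMinOn f (Ioo a b) c := by
  obtain ⟨c, hc⟩ := exists_between hab
  obtain ⟨a', ha', hfa'⟩ :=
    (mem_nhdsGT_iff_exists_Ioo_subset' hab).1 (ha.eventually_ge_atTop (f c))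
  obtain ⟨b', hb', hfb'⟩ :=
    (mem_nhdsLT_iff_exists_Ioo_subset' hab).1 (hb.eventually_ge_atTop (f c))
  have hK : Icc (min a' c) (max b' c) ⊆ Ioo a b := fun x hx =>
    ⟨lt_of_lt_of_le (lt_min ha' hc.1) hx.1, lt_of_le_of_lt hx.2 (max_lt hb' hc.2)⟩
  have hcK : c ∈ Icc (min a' c) (max b' c) := ⟨min_le_right _ _, le_max_right _ _⟩
  obtain ⟨m, hmK, hm⟩ := isCompact_Icc.exists_isMinOn ⟨c, hcK⟩ (hf.mono hK)
  refine ⟨m, hK hmK, fun y hy => ?_⟩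
  by_cases hyK : y ∈ Icc (min a' c) (max b' c)
  · exact hm hyK
  refine (hm hcK).trans ?_
  rcases not_and_or.1 hyK with hy' | hy'
  · exact hfa' ⟨hy.1, lt_of_lt_of_le (not_le.1 hy') (min_le_left _ _)⟩
  · exact hfb' ⟨lt_of_le_of_lt (le_max_left _ _) (not_le.1 hy'), hy.2⟩

theorem ConvexOn.map_sub_map_zero_le_mul {g : ℝ → ℝ} {s : Set ℝ} (hg : ConvexOn ℝ s g)
    (h0 : (0 : ℝ) ∈ s) {x u : ℝ} (hx : x / u ∈ s) (hu₀ : 0 < u) (hu₁ : u ≤ 1) :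
    g x - g 0 ≤ u * (g (x / u) - g 0) := by
  have := hg.2 hx h0 hu₀.le (sub_nonneg.2 hu₁) (add_sub_cancel u 1)
  simp only [smul_eq_mul, mul_zero, add_zero, mul_div_cancel₀ x hu₀.ne'] at this
  linarith

theorem tendsto_mul_rpow_div_sub_one_nhdsGT_zero {b R : ℝ} (hb : 1 < b) (hR : 0 < R) :
    Tendsto (fun u => u * (b ^ (R / u) - 1)) (𝓝[>] 0) atTop := by
  have hc : 0 < R * log b := mul_pos hR (log_pos hb)
  have hy : Tendsto (fun y => exp (R * log b * y) / y ^ (1 : ℝ) + -y⁻¹) atTop atTop :=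
    (tendsto_exp_mul_div_rpow_atTop 1 _ hc).atTop_add (by simpa using tendsto_inv_atTop_zero.neg)
  refine (hy.comp tendsto_inv_nhdsGT_zero).congr' ?_
  filter_upwards [self_mem_nhdsWithin] with u (hu : 0 < u)
  rw [Function.comp_apply, rpow_one, inv_inv, rpow_def_of_pos (by linarith)]
  field_simp
  ring_nf

theorem tendsto_sub_nhdsLT_nhdsGT_zero (a : ℝ) : Tendsto (a - ·) (𝓝[<] a) (𝓝[>] 0) :=
  tendsto_nhdsWithin_of_tendsto_nhds_of_eventually_within _
    (((continuous_sub_left a).tendsto' a 0 (sub_self a)).mono_left nhdsWithin_le_nhds)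
    (eventually_nhdsWithin_of_forall fun _ hx => mem_Ioi.2 (sub_pos.2 hx))

noncomputable def energyShortfall (R σ q T u : ℝ) : ℝ := u * ((2 : ℝ) ^ (R / u) - 1) * σ - q / T

noncomputable def requiredPower (R σ q T τ : ℝ) : ℝ := energyShortfall R σ q T (1 - τ) / τ

section requiredPower

variable {R σ q T : ℝ}

theorem energyShortfall_pos (hσ : 0 ≤ σ) (hcond : q / T < ((2 : ℝ) ^ R - 1) * σ) {u : ℝ}
    (hu₀ : 0 < u) (hu₁ : u ≤ 1) : 0 < energyShortfall R σ q T u := by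
  have hconv := (convexOn_rpow_left two_pos).map_sub_map_zero_le_mul (mem_univ 0)
    (mem_univ (R / u)) hu₀ hu₁
  rw [rpow_zero] at hconv
  unfold energyShortfall
  nlinarith [mul_le_mul_of_nonneg_right hconv hσ]

theorem continuousOn_energyShortfall : ContinuousOn (energyShortfall R σ q T) (Ioi 0) := by
  have hpow : ContinuousOn (fun u : ℝ => (2 : ℝ) ^ (R / u)) (Ioi 0) :=
    continuousOn_const.rpow (continuousOn_const.div continuousOn_id fun _ hu => ne_of_gt hu)
      fun _ _ => Or.inl two_ne_zero
  unfold energyShortfall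
  fun_prop

theorem tendsto_energyShortfall_nhdsGT_zero (hR : 0 < R) (hσ : 0 < σ) :
    Tendsto (energyShortfall R σ q T) (𝓝[>] 0) atTop :=
  tendsto_atTop_add_const_right _ _
    ((tendsto_mul_rpow_div_sub_one_nhdsGT_zero one_lt_two hR).atTop_mul_const hσ)

theorem requiredPower_pos (hσ : 0 ≤ σ) (hcond : q / T < ((2 : ℝ) ^ R - 1) * σ) {τ : ℝ}
    (hτ : τ ∈ Ioo 0 1) : 0 < requiredPower R σ q T τ :=
  div_pos (energyShortfall_pos hσ hcond (sub_pos.2 hτ.2) (sub_le_self 1 hτ.1.le)) hτ.1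

theorem continuousOn_requiredPower : ContinuousOn (requiredPower R σ q T) (Ioo 0 1) :=
  (continuousOn_energyShortfall.comp (continuousOn_const.sub continuousOn_id)
    fun _ hτ => mem_Ioi.2 (sub_pos.2 hτ.2)).div continuousOn_id fun _ hτ => ne_of_gt hτ.1

theorem tendsto_requiredPower_nhdsGT_zero (hσ : 0 ≤ σ)
    (hcond : q / T < ((2 : ℝ) ^ R - 1) * σ) :
    Tendsto (requiredPower R σ q T) (𝓝[>] 0) atTop := by
  have hg : Tendsto (fun τ => energyShortfall R σ q T (1 - τ)) (𝓝[>] 0)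
      (𝓝 (energyShortfall R σ q T 1)) :=
    ((continuousOn_energyShortfall.continuousAt (Ioi_mem_nhds one_pos)).tendsto.comp
      ((continuous_sub_left 1).tendsto' 0 1 (sub_zero 1))).mono_left nhdsWithin_le_nhds
  exact (hg.pos_mul_atTop (energyShortfall_pos hσ hcond one_pos le_rfl)
    tendsto_inv_nhdsGT_zero).congr fun _ => (div_eq_mul_inv _ _).symm

theorem tendsto_requiredPower_nhdsLT_one (hR : 0 < R) (hσ : 0 < σ) :
    Tendsto (requiredPower R σ q T) (𝓝[<] 1) atTop := by
  have hinv : Tendsto (fun τ : ℝ => τ⁻¹) (𝓝[<] 1) (𝓝 1) := by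
    simpa using (tendsto_inv₀ (one_ne_zero (α := ℝ))).mono_left nhdsWithin_le_nhds
  exact (((tendsto_energyShortfall_nhdsGT_zero hR hσ).comp (tendsto_sub_nhdsLT_nhdsGT_zero 1)
    ).atTop_mul_pos one_pos hinv).congr fun _ => (div_eq_mul_inv _ _).symm

end requiredPower

theorem stmt_5_general (R σ q T : ℝ) (hR : 0 < R) (hσ : 0 < σ)
    (hcond : q / T < ((2:ℝ) ^ R - 1) * σ)
    (f : ℝ → ℝ)
    (hf : ∀ τ ∈ Set.Ioo (0:ℝ) 1,
      f τ = ((1 - τ) / τ) * ((2:ℝ) ^ (R / (1 - τ)) - 1) * σ - q / (T * τ)) :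
    Tendsto f (nhdsWithin 0 (Set.Ioi 0)) atTop ∧
    Tendsto f (nhdsWithin 1 (Set.Iio 1)) atTop ∧
    ∃ τstar ∈ Set.Ioo (0:ℝ) 1, 0 < f τstar ∧ ∀ τ ∈ Set.Ioo (0:ℝ) 1, f τstar ≤ f τ := by
  have hfP : EqOn (requiredPower R σ q T) f (Ioo 0 1) := fun τ hτ => by
    rw [hf τ hτ, requiredPower, energyShortfall]
    field_simp
  have hlim₀ : Tendsto f (𝓝[>] 0) atTop :=
    (tendsto_requiredPower_nhdsGT_zero hσ.le hcond).congr'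
      (eventuallyEq_of_mem (Ioo_mem_nhdsGT one_pos) hfP)
  have hlim₁ : Tendsto f (𝓝[<] 1) atTop :=
    (tendsto_requiredPower_nhdsLT_one hR hσ).congr'
      (eventuallyEq_of_mem (Ioo_mem_nhdsLT one_pos) hfP)
  have hcont : ContinuousOn f (Ioo 0 1) := continuousOn_requiredPower.congr hfP.symm
  obtain ⟨τ, hτ, hmin⟩ := hcont.exists_isMinOn_Ioo_of_tendsto_atTop one_pos hlim₀ hlim₁
  exact ⟨hlim₀, hlim₁, τ, hτ, hfP hτ ▸ requiredPower_pos hσ.le hcond hτ, hmin⟩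

theorem stmt_5 (R σ q T : ℝ) (hR : 0 < R) (hσ : 0 < σ) (hq : 0 < q) (hT : 0 < T)
    (hcond : q / T < ((2:ℝ) ^ R - 1) * σ)
    (f : ℝ → ℝ)
    (hf : ∀ τ ∈ Set.Ioo (0:ℝ) 1,
      f τ = ((1 - τ) / τ) * ((2:ℝ) ^ (R / (1 - τ)) - 1) * σ - q / (T * τ)) :
    Tendsto f (nhdsWithin 0 (Set.Ioi 0)) atTop ∧
    Tendsto f (nhdsWithin 1 (Set.Iio 1)) atTop ∧
    ∃ τstar ∈ Set.Ioo (0:ℝ) 1, 0 < f τstar ∧ ∀ τ ∈ Set.Ioo (0:ℝ) 1, f τstar ≤ f τ :=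
  stmt_5_general R σ q T hR hσ hcond f hf
end
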